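/- arXiv:2207.04759 — 2 statements merged into one kernel-verified Lean document; each statement's English description precedes it below -/
import Mathlib

section
/- Let F₂ = ⟨a,b⟩ be free of rank 2, H = ⟨ba, ab²a⁻¹⟩ and g = a. Write h₁ = ba, h₂ = ab²a⁻¹. Then the ideal I_g = ker φ_g ⊆ H * ⟨x⟩ is generated as a normal subgroup by the single equation x⁻¹ h₂ x x h₁⁻¹ x h₁⁻¹ (of degree 4); in particular, every equation in I_g has even degree. -/
open Monoid
open scoped Monoid.Coprod

/-- The generator `x` of the infinite cyclic group `⟨x⟩ = Multiplicative ℤ`. -/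
def xgen : Multiplicative ℤ := Multiplicative.ofAdd 1

/-- An alternating expression `h₀ · x^{β₁} c₁ · x^{β₂} c₂ ⋯ x^{β_m} c_m` in `H ∗ ⟨x⟩`,
recorded by the head coefficient `h₀` and the list `l = [(β₁,c₁),…,(β_m,c_m)]`. -/
def coprodExpr {H : Type*} [Group H] (h₀ : H) (l : List (ℤ × H)) : H ∗ Multiplicative ℤ :=
  Coprod.inl h₀ * (l.map fun p => Coprod.inr (xgen ^ p.1) * Coprod.inl p.2).prod

/-- The degree of an equation `w ∈ H ∗ ⟨x⟩`: the number of occurrences of `x` and `x⁻¹`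
in the cyclic reduction of `w`.  Equivalently (and this is how we formalize it), it is the
minimum, over all elements conjugate to `w` and over all ways of writing such a conjugate as
an alternating expression `h₀ x^{β₁} c₁ ⋯ x^{β_m} c_m`, of the total number `∑ᵢ |βᵢ|` of
occurrences of `x^{±1}`; this minimum is achieved exactly by the cyclic reduction of `w`. -/
noncomputable def degree {H : Type*} [Group H] (w : H ∗ Multiplicative ℤ) : ℕ :=
  sInf { n | ∃ (c : H ∗ Multiplicative ℤ) (h₀ : H) (l : List (ℤ × H)),
      c * w * c⁻¹ = coprodExpr h₀ l ∧ (l.map fun p => p.1.natAbs).sum = n }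

/-!
Sending `a ↦ x` and `b ↦ h₁ x⁻¹` gives a homomorphism `ψ : F₂ → (H ∗ ⟨x⟩) ⧸ ⟨⟨w₀⟩⟩` which
sends `ba` back to `h₁` and, modulo `w₀`, `ab²a⁻¹` back to `h₂`; hence `ψ ∘ φ_g` is the quotient
map and `ker φ_g = ⟨⟨w₀⟩⟩`.

The exponent sum of `x` is a conjugation invariant, congruent mod 2 to the number of letters
`x^{±1}`, and equal to 2 on `w₀`. This gives the parity statement and `deg w₀ ≥ 2`. A conjugate
of `w₀` with only two letters `x^{±1}` would be `h₀ x^{β₁} c₁ ⋯` with all `βᵢ ≥ 0`. In the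
permutation representation `a = (0 4 1 3)`, `b = (0 1 2 4)` of `F₂`, `H` preserves each of
`{0}`, `{2, 4}`, `{1, 2, 3, 4}` and `a` maps each into the next, so such a word moves `0` and is
not in `ker φ_g`.
-/

open Set

namespace List

theorem natAbs_sum_le_sum_map_natAbs (l : List ℤ) : l.sum.natAbs ≤ (l.map Int.natAbs).sum := by
  induction l with
  | nil => simp
  | cons a l ih =>
    simp only [sum_cons, map_cons]
    exact (Int.natAbs_add_le _ _).trans (by omega)

theorem even_sum_map_natAbs_iff (l : List ℤ) : Even (l.map Int.natAbs).sum ↔ Even l.sum := by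
  induction l with
  | nil => simp
  | cons a l ih =>
    rw [sum_cons, map_cons, sum_cons, Nat.even_add, Int.even_add, ih, Int.natAbs_even]

theorem le_sum_map_natAbs (l : List ℤ) : l.sum ≤ (l.map Int.natAbs).sum :=
  Int.le_natAbs.trans (by exact_mod_cast natAbs_sum_le_sum_map_natAbs l)

theorem nonneg_of_sum_map_natAbs_eq_sum {l : List ℤ} (hl : ((l.map Int.natAbs).sum : ℤ) = l.sum) :
    ∀ x ∈ l, 0 ≤ x := by
  induction l with
  | nil => simp
  | cons a l ih =>
    simp only [map_cons, sum_cons, Nat.cast_add, Int.natCast_natAbs] at hl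
    have ha := le_abs_self a
    have hsum := le_sum_map_natAbs l
    intro x hx
    rcases mem_cons.1 hx with rfl | hx
    · exact (abs_nonneg x).trans_eq (by omega)
    · exact ih (by omega) x hx

theorem map_natAbs_fst {α : Type*} (l : List (ℤ × α)) :
    (l.map fun p => p.1.natAbs) = (l.map Prod.fst).map Int.natAbs := by
  simp [Function.comp_def]

end List

section Degree

variable {H : Type*} [Group H]

theorem coprodExpr_nil (h₀ : H) : coprodExpr h₀ [] = Coprod.inl h₀ := by
  simp [coprodExpr]

theorem coprodExpr_cons (h₀ c : H) (β : ℤ) (l : List (ℤ × H)) :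
    coprodExpr h₀ ((β, c) :: l) = Coprod.inl h₀ * Coprod.inr (xgen ^ β) * coprodExpr c l := by
  simp [coprodExpr, mul_assoc]

variable (H) in
def xExponentSum : H ∗ Multiplicative ℤ →* Multiplicative ℤ :=
  Coprod.lift 1 (MonoidHom.id _)

theorem xExponentSum_conj (c w : H ∗ Multiplicative ℤ) :
    xExponentSum H (c * w * c⁻¹) = xExponentSum H w := by
  simp

theorem toAdd_xExponentSum_coprodExpr (h₀ : H) (l : List (ℤ × H)) :
    (xExponentSum H (coprodExpr h₀ l)).toAdd = (l.map Prod.fst).sum := by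
  induction l generalizing h₀ with
  | nil => simp [coprodExpr_nil, xExponentSum]
  | cons p l ih =>
    rw [coprodExpr_cons]
    simp only [map_mul, toAdd_mul, ih]
    simp [xExponentSum, xgen]

theorem sum_fst_eq_toAdd_xExponentSum {c w : H ∗ Multiplicative ℤ} {h₀ : H} {l : List (ℤ × H)}
    (hw : c * w * c⁻¹ = coprodExpr h₀ l) : (l.map Prod.fst).sum = (xExponentSum H w).toAdd := by
  rw [← toAdd_xExponentSum_coprodExpr h₀, ← hw, xExponentSum_conj]

theorem degree_eq_of_forall_le {w : H ∗ Multiplicative ℤ} {n : ℕ}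
    (hrep : ∃ (c : H ∗ Multiplicative ℤ) (h₀ : H) (l : List (ℤ × H)),
      c * w * c⁻¹ = coprodExpr h₀ l ∧ (l.map fun p => p.1.natAbs).sum = n)
    (hmin : ∀ (c : H ∗ Multiplicative ℤ) (h₀ : H) (l : List (ℤ × H)),
      c * w * c⁻¹ = coprodExpr h₀ l → n ≤ (l.map fun p => p.1.natAbs).sum) :
    degree w = n :=
  le_antisymm (Nat.sInf_le hrep) <|
    le_csInf ⟨n, hrep⟩ fun _ ⟨c, h₀, l, hw, hl⟩ => hl ▸ hmin c h₀ l hw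

theorem even_degree_of_even_xExponentSum {w : H ∗ Multiplicative ℤ}
    (hw : Even (xExponentSum H w).toAdd) : Even (degree w) := by
  unfold degree
  rcases eq_empty_or_nonempty {n | ∃ (c : H ∗ Multiplicative ℤ) (h₀ : H) (l : List (ℤ × H)),
      c * w * c⁻¹ = coprodExpr h₀ l ∧ (l.map fun p => p.1.natAbs).sum = n} with hempty | hne
  · rw [hempty, Nat.sInf_empty]
    exact .zero
  · obtain ⟨c, h₀, l, hrep, hl⟩ := Nat.sInf_mem hne
    rw [← hl, List.map_natAbs_fst, List.even_sum_map_natAbs_iff, sum_fst_eq_toAdd_xExponentSum hrep]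
    exact hw

theorem even_xExponentSum_of_mem_normalClosure {w₀ w : H ∗ Multiplicative ℤ}
    (hw₀ : Even (xExponentSum H w₀).toAdd) (hw : w ∈ Subgroup.normalClosure {w₀}) :
    Even (xExponentSum H w).toAdd := by
  let parity := (Int.castAddHom (ZMod 2)).toMultiplicative.comp (xExponentSum H)
  have hle : Subgroup.normalClosure {w₀} ≤ parity.ker := by
    refine Subgroup.normalClosure_le_normal (singleton_subset_iff.2 ?_)
    exact ZMod.intCast_eq_zero_iff_even.2 hw₀
  exact ZMod.intCast_eq_zero_iff_even.1 (hle hw)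

theorem mapsTo_coprodExpr_of_nonneg {X : Type*} (ρ : H ∗ Multiplicative ℤ →* Equiv.Perm X)
    (S : ℕ → Set X)
    (hinl : ∀ h k, MapsTo (ρ (Coprod.inl h)) (S k) (S k))
    (hinr : ∀ k, MapsTo (ρ (Coprod.inr xgen)) (S k) (S (k + 1)))
    (h₀ : H) (l : List (ℤ × H)) (hl : ∀ p ∈ l, 0 ≤ p.1) :
    MapsTo (ρ (coprodExpr h₀ l)) (S 0) (S (l.map fun p => p.1.natAbs).sum) := by
  have hpow : ∀ k (n : ℕ), MapsTo (ρ (Coprod.inr (xgen ^ (n : ℤ)))) (S k) (S (k + n)) := by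
    intro k n
    induction n with
    | zero => simpa using mapsTo_id (S k)
    | succ n ih =>
      rw [Nat.cast_succ, add_comm, zpow_one_add, map_mul, map_mul, Equiv.Perm.coe_mul, ← add_assoc]
      exact (hinr _).comp ih
  induction l generalizing h₀ with
  | nil => simpa [coprodExpr_nil] using hinl h₀ 0
  | cons p l ih =>
    obtain ⟨β, c⟩ := p
    have hβ : (β.natAbs : ℤ) = β := Int.natAbs_of_nonneg (hl _ List.mem_cons_self)
    rw [coprodExpr_cons, map_mul, map_mul, Equiv.Perm.coe_mul, Equiv.Perm.coe_mul, List.map_cons,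
      List.sum_cons, add_comm, ← hβ]
    exact (hinl h₀ _).comp ((hpow _ _).comp (ih c fun q hq => hl q (List.mem_cons_of_mem _ hq)))

end Degree

theorem Subgroup.closure_eq_top_of_eq_closure_image_val {G : Type*} [Group G] {H : Subgroup G}
    {s : Set H} (hH : H = Subgroup.closure (Subtype.val '' s)) : Subgroup.closure s = ⊤ := by
  apply Subgroup.map_injective H.subtype_injective
  rw [MonoidHom.map_closure, ← MonoidHom.range_eq_map, Subgroup.range_subtype]
  exact hH.symm

section Evaluation

variable {G : Type*} [Group G]

def evalAt (H : Subgroup G) (g : G) : H ∗ Multiplicative ℤ →* G :=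
  Coprod.lift H.subtype (zpowersHom G g)

@[simp]
theorem evalAt_inl (H : Subgroup G) (g : G) (h : H) : evalAt H g (Coprod.inl h) = h :=
  Coprod.lift_apply_inl _ _ h

@[simp]
theorem evalAt_inr_xgen (H : Subgroup G) (g : G) : evalAt H g (Coprod.inr xgen) = g := by
  simp [evalAt, xgen]

end Evaluation

section Relator

variable {H : Type*} [Group H]

def relator (h₁ h₂ : H) : H ∗ Multiplicative ℤ :=
  (Coprod.inr xgen)⁻¹ * Coprod.inl h₂ * Coprod.inr xgen * Coprod.inr xgen *
    (Coprod.inl h₁)⁻¹ * Coprod.inr xgen * (Coprod.inl h₁)⁻¹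

theorem relator_eq_coprodExpr (h₁ h₂ : H) :
    relator h₁ h₂ = coprodExpr 1 [(-1, h₂), (2, h₁⁻¹), (1, h₁⁻¹)] := by
  simp only [relator, coprodExpr_cons, coprodExpr_nil, map_one, one_mul, zpow_neg, zpow_one,
    zpow_two, map_mul, map_inv, mul_assoc]

theorem toAdd_xExponentSum_relator (h₁ h₂ : H) : (xExponentSum H (relator h₁ h₂)).toAdd = 2 := by
  rw [relator_eq_coprodExpr, toAdd_xExponentSum_coprodExpr]
  rfl

end Relator

section Example

open scoped Pointwise

local notation "𝐚" => FreeGroup.of true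
local notation "𝐛" => FreeGroup.of false

variable {H : Subgroup (FreeGroup Bool)} {h₁ h₂ : H}

theorem evalAt_relator (hh₁ : (h₁ : FreeGroup Bool) = 𝐛 * 𝐚)
    (hh₂ : (h₂ : FreeGroup Bool) = 𝐚 * 𝐛 * 𝐛 * 𝐚⁻¹) :
    evalAt H 𝐚 (relator h₁ h₂) = 1 := by
  rw [relator]
  simp only [map_mul, map_inv, evalAt_inl, evalAt_inr_xgen, hh₁, hh₂]
  group

theorem normalClosure_relator_eq_ker
    (hH : H = Subgroup.closure {𝐛 * 𝐚, 𝐚 * 𝐛 * 𝐛 * 𝐚⁻¹})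
    (hh₁ : (h₁ : FreeGroup Bool) = 𝐛 * 𝐚)
    (hh₂ : (h₂ : FreeGroup Bool) = 𝐚 * 𝐛 * 𝐛 * 𝐚⁻¹) :
    Subgroup.normalClosure {relator h₁ h₂} = (evalAt H 𝐚).ker := by
  set N := Subgroup.normalClosure {relator h₁ h₂}
  refine le_antisymm (Subgroup.normalClosure_le_normal
    (singleton_subset_iff.2 (evalAt_relator hh₁ hh₂))) ?_
  let π := QuotientGroup.mk' N
  let X := π (Coprod.inr xgen)
  let T := π (Coprod.inl h₁)
  have hrel : X⁻¹ * π (Coprod.inl h₂) * X * X * T⁻¹ * X * T⁻¹ = 1 := by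
    have hπ : π (relator h₁ h₂) = 1 :=
      (QuotientGroup.eq_one_iff _).2 (Subgroup.subset_normalClosure rfl)
    simpa only [relator, map_mul, map_inv] using hπ
  let ψ : FreeGroup Bool →* (H ∗ Multiplicative ℤ) ⧸ N :=
    FreeGroup.lift fun t => cond t X (T * X⁻¹)
  have hgen : Subgroup.closure {h₁, h₂} = ⊤ := by
    refine Subgroup.closure_eq_top_of_eq_closure_image_val ?_
    rw [image_pair, hh₁, hh₂]
    exact hH
  have hψH : ψ.comp H.subtype = π.comp Coprod.inl := by
    refine MonoidHom.eq_of_eqOn_dense hgen ?_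
    rintro x (rfl | hx)
    · simp [ψ, hh₁, T]
    · rw [hx]
      calc ψ ↑h₂ = X * T * X⁻¹ * T * X⁻¹ * X⁻¹ := by simp [ψ, hh₂, mul_assoc]
        _ = X * (X⁻¹ * π (Coprod.inl h₂) * X * X * T⁻¹ * X * T⁻¹) * T * X⁻¹ * T * X⁻¹ * X⁻¹ := by
          rw [hrel, mul_one]
        _ = π (Coprod.inl h₂) := by group
  have hψφ : ψ.comp (evalAt H 𝐚) = π := by
    refine Coprod.hom_ext ?_ (MonoidHom.ext_mint ?_)
    · rw [MonoidHom.comp_assoc, ← hψH]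
      rfl
    · change ψ (evalAt H 𝐚 (Coprod.inr xgen)) = X
      simp [ψ]
  intro w hw
  refine (QuotientGroup.eq_one_iff w).1 ?_
  change π w = 1
  rw [← hψφ, MonoidHom.comp_apply, hw, map_one]

def permA : Equiv.Perm (Fin 5) := ⟨![4, 3, 2, 0, 1], ![3, 4, 2, 1, 0], by decide, by decide⟩

def permB : Equiv.Perm (Fin 5) := ⟨![1, 2, 4, 3, 0], ![4, 0, 1, 3, 2], by decide, by decide⟩

def permRep : FreeGroup Bool →* Equiv.Perm (Fin 5) := FreeGroup.lift fun t => cond t permA permB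

def permLevel : ℕ → Finset (Fin 5)
  | 0 => {0}
  | 1 => {2, 4}
  | 2 => {1, 2, 3, 4}
  | _ + 3 => Finset.univ

theorem permRep_of_true_mapsTo_permLevel_succ (k : ℕ) :
    MapsTo (permRep 𝐚) (permLevel k) (permLevel (k + 1)) := by
  match k with
  | 0 | 1 | 2 =>
    intro q
    simp only [Finset.mem_coe, permRep, FreeGroup.lift_apply_of]
    revert q
    decide
  | _ + 3 => exact fun _ _ => Finset.mem_univ _

theorem closure_le_comap_stabilizer_permLevel (k : ℕ) :
    Subgroup.closure {𝐛 * 𝐚, 𝐚 * 𝐛 * 𝐛 * 𝐚⁻¹} ≤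
      (MulAction.stabilizer (Equiv.Perm (Fin 5)) (permLevel k)).comap permRep := by
  rw [Subgroup.closure_le]
  match k with
  | 0 | 1 | 2 =>
    rintro _ (rfl | rfl) <;>
      simp only [SetLike.mem_coe, Subgroup.mem_comap, MulAction.mem_stabilizer_iff, map_mul,
        map_inv, permRep, FreeGroup.lift_apply_of] <;> decide
  | _ + 3 => exact fun g _ => Finset.smul_finset_univ

theorem permRep_mapsTo_permLevel
    (hH : H = Subgroup.closure {𝐛 * 𝐚, 𝐚 * 𝐛 * 𝐛 * 𝐚⁻¹}) (h : H) (k : ℕ) :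
    MapsTo (permRep h) (permLevel k) (permLevel k) := by
  have hh : permRep h • permLevel k = permLevel k :=
    closure_le_comap_stabilizer_permLevel k (hH ▸ h.2)
  exact fun q hq => hh ▸ Finset.smul_mem_smul_finset hq

theorem sum_map_natAbs_ne_two_of_conj_relator_eq
    (hH : H = Subgroup.closure {𝐛 * 𝐚, 𝐚 * 𝐛 * 𝐛 * 𝐚⁻¹})
    (hh₁ : (h₁ : FreeGroup Bool) = 𝐛 * 𝐚) (hh₂ : (h₂ : FreeGroup Bool) = 𝐚 * 𝐛 * 𝐛 * 𝐚⁻¹)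
    {c : H ∗ Multiplicative ℤ} {h₀ : H} {l : List (ℤ × H)}
    (hrep : c * relator h₁ h₂ * c⁻¹ = coprodExpr h₀ l) :
    (l.map fun p => p.1.natAbs).sum ≠ 2 := by
  intro hcount
  have hsum : (l.map Prod.fst).sum = 2 := by
    rw [sum_fst_eq_toAdd_xExponentSum hrep, toAdd_xExponentSum_relator]
  have hnonneg : ∀ p ∈ l, 0 ≤ p.1 := by
    have h := List.nonneg_of_sum_map_natAbs_eq_sum (l := l.map Prod.fst)
      (by rw [← List.map_natAbs_fst, hcount, hsum]; rfl)
    simpa using h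
  let ρ := permRep.comp (evalAt H 𝐚)
  have hmaps := mapsTo_coprodExpr_of_nonneg ρ (fun k => permLevel k)
    (fun h k => by simpa [ρ] using permRep_mapsTo_permLevel hH h k)
    (fun k => by simpa [ρ] using permRep_of_true_mapsTo_permLevel_succ k) h₀ l hnonneg
  have hρ : ρ (coprodExpr h₀ l) = 1 := by
    simp [← hrep, ρ, evalAt_relator hh₁ hh₂]
  have h0 := hmaps (show (0 : Fin 5) ∈ (permLevel 0 : Set (Fin 5)) by decide)
  rw [hρ, hcount] at h0
  exact absurd h0 (by decide)

theorem degree_relator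
    (hH : H = Subgroup.closure {𝐛 * 𝐚, 𝐚 * 𝐛 * 𝐛 * 𝐚⁻¹})
    (hh₁ : (h₁ : FreeGroup Bool) = 𝐛 * 𝐚) (hh₂ : (h₂ : FreeGroup Bool) = 𝐚 * 𝐛 * 𝐛 * 𝐚⁻¹) :
    degree (relator h₁ h₂) = 4 := by
  refine degree_eq_of_forall_le ⟨1, 1, [(-1, h₂), (2, h₁⁻¹), (1, h₁⁻¹)],
    by rw [one_mul, inv_one, mul_one, relator_eq_coprodExpr], rfl⟩ ?_
  intro c h₀ l hrep
  have hsum : (l.map Prod.fst).sum = 2 := by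
    rw [sum_fst_eq_toAdd_xExponentSum hrep, toAdd_xExponentSum_relator]
  have hge : 2 ≤ (l.map fun p => p.1.natAbs).sum := by
    simpa [List.map_natAbs_fst, hsum] using List.natAbs_sum_le_sum_map_natAbs (l.map Prod.fst)
  have heven : Even (l.map fun p => p.1.natAbs).sum := by
    rw [List.map_natAbs_fst, List.even_sum_map_natAbs_iff, hsum]
    decide
  have hne := sum_map_natAbs_ne_two_of_conj_relator_eq hH hh₁ hh₂ hrep
  obtain ⟨k, hk⟩ := heven
  omega

end Example

/-- in `F₂ = ⟨a,b⟩` with `H = ⟨h₁,h₂⟩`, `h₁ = ba`, `h₂ = ab²a⁻¹`, and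
`g = a`, the ideal `I_g = ker φ_g` is the normal closure of the single equation
`x⁻¹ h₂ x x h₁⁻¹ x h₁⁻¹`, which has degree 4; in particular every equation in `I_g` has
even degree. -/
theorem stmt9 (a b : FreeGroup Bool) (ha : a = FreeGroup.of true) (hb : b = FreeGroup.of false)
    (H : Subgroup (FreeGroup Bool)) (hHdef : H = Subgroup.closure {b * a, a * b * b * a⁻¹})
    (h₁ h₂ : ↥H) (hh₁ : (h₁ : FreeGroup Bool) = b * a) (hh₂ : (h₂ : FreeGroup Bool) = a * b * b * a⁻¹)
    (φ : ↥H ∗ Multiplicative ℤ →* FreeGroup Bool)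
    (hφ : φ = Coprod.lift H.subtype (zpowersHom (FreeGroup Bool) a))
    (w₀ : ↥H ∗ Multiplicative ℤ)
    (hw₀ : w₀ = (Coprod.inr xgen)⁻¹ * Coprod.inl h₂ * Coprod.inr xgen * Coprod.inr xgen *
      (Coprod.inl h₁)⁻¹ * Coprod.inr xgen * (Coprod.inl h₁)⁻¹) :
    Subgroup.normalClosure {w₀} = φ.ker ∧ degree w₀ = 4 ∧
      ∀ w ∈ φ.ker, Even (degree w) := by
  subst ha hb hφ hw₀
  have hker : Subgroup.normalClosure {relator h₁ h₂} = (evalAt H (FreeGroup.of true)).ker :=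
    normalClosure_relator_eq_ker hHdef hh₁ hh₂
  refine ⟨hker, degree_relator hHdef hh₁ hh₂, fun w hw => ?_⟩
  refine even_degree_of_even_xExponentSum (even_xExponentSum_of_mem_normalClosure ?_ (hker ▸ hw))
  rw [toAdd_xExponentSum_relator]
  decide
end

section
/- Let H be a group with at least two distinct non-trivial elements and let N be a non-trivial normal subgroup of H * ⟨x⟩ that is the kernel of a homomorphism to a group which is injective on H (so N intersects H and ⟨x⟩-conjugates appropriately). Suppose N contains a non-trivial cyclically reduced element of odd degree d. Then for every sufficiently large integer n (explicitly, every n ≥ 3d), N contains a non-trivial element of degree n. -/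
open Monoid
open scoped Monoid.Coprod

/-!
Conjugate the given element of `N` to a cyclically reduced `v = x^{β₁} c₁ ⋯ x^{β_m} c_m` with
`∑ |βᵢ| = d`. For `k ≥ 1` and `h ∉ {1, c_m⁻¹}`, the element `v^R · g v g⁻¹` of `N`, where
`g = h x^k h⁻¹`, is again cyclically reduced, of degree `(R + 1) d + 2k`; for `k = 0` take
`v^(R+1)`. Since `d` is odd, `R ∈ {1, 2}` gives every `n ≥ 3d`.

Degrees are bounded below by the number `ℓ` of letters `x^{±1}` in the reduced word of the free
product: `ℓ` is subadditive and `ℓ(v^M) = M d` for cyclically reduced `v`, which forces `ℓ ≥ d`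
on every conjugate of `v`.
-/

namespace Monoid.CoprodI.Word

variable {ι : Type*} {M : ι → Type*} [∀ i, Monoid (M i)] (wt : ∀ i, M i → ℕ)

def weight (w : Word M) : ℕ := (w.toList.map fun a => wt a.1 a.2).sum

@[simp] theorem weight_empty : weight wt (empty : Word M) = 0 := rfl

@[simp] theorem weight_cons {i} (m : M i) (w : Word M) (hmw : w.fstIdx ≠ some i) (h1 : m ≠ 1) :
    weight wt (cons m w hmw h1) = wt i m + weight wt w := by
  simp [weight]

variable [∀ i, DecidableEq (M i)]

theorem weight_rcons (hwt₁ : ∀ i, wt i 1 = 0) {i} (p : Pair M i) :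
    weight wt (rcons p) = wt i p.head + weight wt p.tail := by
  by_cases h : p.head = 1
  · simp [rcons, h, hwt₁]
  · simp [rcons, h]

variable [DecidableEq ι]

@[simp] theorem equiv_one : equiv (1 : CoprodI M) = empty :=
  one_smul (CoprodI M) (empty : Word M)

theorem equiv_mul (u v : CoprodI M) : equiv (u * v) = (equiv u).prod • equiv v := by
  change (u * v) • (empty : Word M) = equiv.symm (equiv u) • v • (empty : Word M)
  rw [Equiv.symm_apply_apply, mul_smul]

theorem equiv_of_mul {i} {m : M i} (hm : m ≠ 1) {u : CoprodI M} (hu : (equiv u).fstIdx ≠ some i) :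
    equiv (of m * u) = cons m (equiv u) hu hm := by
  rw [cons_eq_smul]
  exact mul_smul (of m) u (empty : Word M)

theorem weight_of_smul_le (hwt₁ : ∀ i, wt i 1 = 0)
    (hwt : ∀ i (a b : M i), wt i (a * b) ≤ wt i a + wt i b) {i} (m : M i) (w : Word M) :
    weight wt (of m • w) ≤ wt i m + weight wt w := by
  have hw : weight wt w = wt i (equivPair i w).head + weight wt (equivPair i w).tail := by
    conv_lhs => rw [← (equivPair i).symm_apply_apply w, equivPair_symm, weight_rcons wt hwt₁]
  rw [of_smul_def, weight_rcons wt hwt₁, hw, ← add_assoc]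
  exact Nat.add_le_add_right (hwt i _ _) _

theorem weight_equiv_of_le (hwt₁ : ∀ i, wt i 1 = 0)
    (hwt : ∀ i (a b : M i), wt i (a * b) ≤ wt i a + wt i b) {i} (m : M i) :
    weight wt (equiv (of m)) ≤ wt i m :=
  weight_of_smul_le wt hwt₁ hwt m empty

theorem weight_prod_smul_le (hwt₁ : ∀ i, wt i 1 = 0)
    (hwt : ∀ i (a b : M i), wt i (a * b) ≤ wt i a + wt i b) (v w : Word M) :
    weight wt (v.prod • w) ≤ weight wt v + weight wt w := by
  induction v using consRecOn with
  | empty => simp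
  | cons i m v hmv h1 ih =>
    rw [prod_cons, mul_smul, weight_cons, add_assoc]
    exact (weight_of_smul_le wt hwt₁ hwt m _).trans (Nat.add_le_add_left ih _)

theorem weight_equiv_mul_le (hwt₁ : ∀ i, wt i 1 = 0)
    (hwt : ∀ i (a b : M i), wt i (a * b) ≤ wt i a + wt i b) (u v : CoprodI M) :
    weight wt (equiv (u * v)) ≤ weight wt (equiv u) + weight wt (equiv v) := by
  rw [equiv_mul]
  exact weight_prod_smul_le wt hwt₁ hwt _ _

end Monoid.CoprodI.Word

universe u

namespace FreeProductDegree

open Monoid.CoprodI Multiplicative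

variable {H : Type u}

/-! ### Alternating expressions -/

@[simp] theorem toAdd_xgen : toAdd xgen = 1 := rfl

def xCount (l : List (ℤ × H)) : ℕ := (l.map fun p => p.1.natAbs).sum

@[simp] theorem xCount_nil : xCount ([] : List (ℤ × H)) = 0 := rfl

@[simp] theorem xCount_cons (p : ℤ × H) (l : List (ℤ × H)) :
    xCount (p :: l) = p.1.natAbs + xCount l := by
  simp [xCount]

@[simp] theorem xCount_append (l l' : List (ℤ × H)) : xCount (l ++ l') = xCount l + xCount l' := by
  simp [xCount]

theorem xCount_flatten_replicate (l : List (ℤ × H)) (N : ℕ) :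
    xCount (List.replicate N l).flatten = N * xCount l := by
  induction N with
  | zero => simp
  | succ N ih => rw [List.replicate_succ, List.flatten_cons, xCount_append, ih, add_one_mul, add_comm]

variable [Group H]

theorem inr_xgen_zpow_pow (a : ℤ) (N : ℕ) :
    Coprod.inr (M := H) (xgen ^ a) ^ N = Coprod.inr (xgen ^ (N * a)) := by
  rw [← map_pow, ← zpow_natCast, ← zpow_mul, mul_comm]

theorem coprodExpr_eq_inl_mul (h₀ : H) (l : List (ℤ × H)) :
    coprodExpr h₀ l = Coprod.inl h₀ * coprodExpr 1 l := by
  simp [coprodExpr]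

@[simp] theorem coprodExpr_one_nil : coprodExpr (1 : H) [] = 1 := by
  simp [coprodExpr]

@[simp] theorem coprodExpr_one_cons (p : ℤ × H) (l : List (ℤ × H)) :
    coprodExpr 1 (p :: l) = Coprod.inr (xgen ^ p.1) * Coprod.inl p.2 * coprodExpr 1 l := by
  simp [coprodExpr, mul_assoc]

@[simp] theorem coprodExpr_one_append (l l' : List (ℤ × H)) :
    coprodExpr 1 (l ++ l') = coprodExpr 1 l * coprodExpr 1 l' := by
  simp [coprodExpr]

theorem coprodExpr_singleton_one (β : ℤ) :
    coprodExpr 1 [(β, (1 : H))] = Coprod.inr (xgen ^ β) := by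
  simp

theorem coprodExpr_eq_cons_zero (h₀ : H) (l : List (ℤ × H)) :
    coprodExpr h₀ l = coprodExpr 1 ((0, h₀) :: l) := by
  simp [coprodExpr_eq_inl_mul h₀ l]

theorem coprodExpr_cons_one_cons (β : ℤ) (q : ℤ × H) (l : List (ℤ × H)) :
    coprodExpr 1 ((β, 1) :: q :: l) = coprodExpr 1 ((β + q.1, q.2) :: l) := by
  simp [zpow_add, mul_assoc]

theorem coprodExpr_append_zero (l : List (ℤ × H)) (q : ℤ × H) (c : H) :
    coprodExpr 1 (l ++ [q, (0, c)]) = coprodExpr 1 (l ++ [(q.1, q.2 * c)]) := by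
  simp [mul_assoc]

theorem coprodExpr_pow (l : List (ℤ × H)) (N : ℕ) :
    coprodExpr 1 l ^ N = coprodExpr 1 (List.replicate N l).flatten := by
  induction N with
  | zero => simp
  | succ N ih => rw [pow_succ', ih, List.replicate_succ, List.flatten_cons, coprodExpr_one_append]

theorem exists_eq_coprodExpr (w : H ∗ Multiplicative ℤ) : ∃ l, w = coprodExpr 1 l := by
  induction w using Coprod.induction_on' with
  | one => exact ⟨[], by simp⟩
  | inl_mul m w ih =>
    obtain ⟨l, rfl⟩ := ih
    exact ⟨(0, m) :: l, by simp⟩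
  | inr_mul z w ih =>
    obtain ⟨l, rfl⟩ := ih
    exact ⟨(toAdd z, 1) :: l, by simp [xgen, ← ofAdd_zsmul]⟩

theorem isConj_coprodExpr_append_comm (l l' : List (ℤ × H)) :
    IsConj (coprodExpr 1 (l ++ l')) (coprodExpr 1 (l' ++ l)) :=
  isConj_iff.mpr ⟨(coprodExpr 1 l)⁻¹, by simp⟩

theorem degree_le_xCount {w : H ∗ Multiplicative ℤ} {h₀ : H} {l : List (ℤ × H)}
    (h : IsConj w (coprodExpr h₀ l)) : degree w ≤ xCount l := by
  obtain ⟨c, hc⟩ := isConj_iff.mp h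
  exact Nat.sInf_le ⟨c, h₀, l, hc, rfl⟩

theorem degree_one : degree (1 : H ∗ Multiplicative ℤ) = 0 :=
  Nat.eq_zero_of_le_zero (degree_le_xCount (h₀ := 1) (l := []) (by simp))

theorem exists_isConj_xCount_eq_degree (w : H ∗ Multiplicative ℤ) :
    ∃ l, IsConj w (coprodExpr 1 l) ∧ xCount l = degree w := by
  obtain ⟨l, hl⟩ := exists_eq_coprodExpr w
  obtain ⟨c, h₀, l', hc, hl'⟩ := Nat.sInf_mem (s := {n | ∃ (c : H ∗ Multiplicative ℤ) (h₀ : H)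
    (l : List (ℤ × H)), c * w * c⁻¹ = coprodExpr h₀ l ∧ (l.map fun p => p.1.natAbs).sum = n})
    ⟨_, 1, 1, l, by simp [hl], rfl⟩
  refine ⟨(0, h₀) :: l', isConj_iff.mpr ⟨c, ?_⟩, ?_⟩
  · rw [hc, coprodExpr_eq_cons_zero]
  · rw [xCount_cons, Int.natAbs_zero, zero_add]
    exact hl'

/-! ### Cyclically reduced expressions -/

def IsReduced (l : List (ℤ × H)) : Prop := ∀ p ∈ l, p.1 ≠ 0 ∧ p.2 ≠ 1

/-- Either all coefficients are nontrivial, or `coprodExpr 1 l` is a single power of `x`. -/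
def IsCyclicallyReduced (l : List (ℤ × H)) : Prop :=
  (∀ p ∈ l, p.1 ≠ 0) ∧ ∀ p ∈ l, p.2 = 1 → l = [p]

theorem IsReduced.isCyclicallyReduced {l : List (ℤ × H)} (h : IsReduced l) :
    IsCyclicallyReduced l :=
  ⟨fun p hp => (h p hp).1, fun p hp h1 => absurd h1 (h p hp).2⟩

theorem IsReduced.flatten_replicate {l : List (ℤ × H)} (h : IsReduced l) (N : ℕ) :
    IsReduced (List.replicate N l).flatten := fun p hp => by
  simp only [List.mem_flatten, List.mem_replicate] at hp
  obtain ⟨_, ⟨-, rfl⟩, hp⟩ := hp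
  exact h p hp

namespace IsCyclicallyReduced

variable {A : List (ℤ × H)} {α : ℤ} {c : H}

theorem ne_zero (h : IsCyclicallyReduced (A ++ [(α, c)])) : α ≠ 0 :=
  h.1 (α, c) (by simp)

theorem isReduced_left (h : IsCyclicallyReduced (A ++ [(α, c)])) : IsReduced A := fun p hp =>
  ⟨h.1 p (by simp [hp]), fun h1 => by
    obtain rfl : A = [] := by simpa using congrArg List.length (h.2 p (by simp [hp]) h1)
    simp at hp⟩

theorem isReduced (h : IsCyclicallyReduced (A ++ [(α, c)])) (hc : c ≠ 1) :
    IsReduced (A ++ [(α, c)]) := fun p hp =>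
  ⟨h.1 p hp, fun h1 => hc <| by
    have := h.2 p hp h1
    rw [List.append_eq_singleton_iff] at this
    simp only [List.cons.injEq, and_true, reduceCtorEq, and_false, or_false] at this
    rwa [← this.2] at h1⟩

theorem eq_nil (h : IsCyclicallyReduced (A ++ [(α, 1)])) : A = [] := by
  simpa using h.2 (α, 1) (by simp) rfl

end IsCyclicallyReduced

/-- Rotations of `l` give conjugate elements, so a zero exponent or a trivial coefficient can be
rotated to the end of `l` and absorbed into its neighbour. -/
theorem exists_shorter_of_not_isCyclicallyReduced {l : List (ℤ × H)}
    (hl : ¬IsCyclicallyReduced l) (hx : xCount l ≠ 0) :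
    ∃ l', IsConj (coprodExpr 1 l) (coprodExpr 1 l') ∧ l'.length < l.length ∧
      xCount l' ≤ xCount l := by
  simp only [IsCyclicallyReduced, not_and_or, not_forall, not_not] at hl
  rcases hl with ⟨⟨β, c⟩, hp, rfl⟩ | ⟨⟨β, c⟩, hp, rfl, hne⟩
  · obtain ⟨s, t, rfl⟩ := List.append_of_mem hp
    rcases List.eq_nil_or_concat' (t ++ s) with hts | ⟨m, q, hts⟩
    · simp_all
    refine ⟨m ++ [(q.1, q.2 * c)], ?_, ?_, ?_⟩
    · have := isConj_coprodExpr_append_comm (s ++ [(0, c)]) t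
      rwa [List.append_assoc, List.singleton_append, ← List.append_assoc, hts, List.append_assoc,
        List.singleton_append, coprodExpr_append_zero] at this
    · have := congrArg List.length hts
      simp only [List.length_append, List.length_cons] at this ⊢
      omega
    · have := congrArg xCount hts
      simp only [xCount_append, xCount_cons, xCount_nil] at this ⊢
      omega
  · obtain ⟨s, t, rfl⟩ := List.append_of_mem hp
    rcases hts : t ++ s with _ | ⟨q, m⟩
    · simp_all
    refine ⟨(β + q.1, q.2) :: m, ?_, ?_, ?_⟩
    · have := isConj_coprodExpr_append_comm s ((β, 1) :: t)
      rwa [List.cons_append, hts, coprodExpr_cons_one_cons] at this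
    · have := congrArg List.length hts
      simp only [List.length_append, List.length_cons] at this ⊢
      omega
    · have := congrArg xCount hts
      have := Int.natAbs_add_le β q.1
      simp only [xCount_append, xCount_cons] at *
      omega

theorem exists_isConj_isCyclicallyReduced {w : H ∗ Multiplicative ℤ} (hd : degree w ≠ 0) :
    ∃ l, IsConj w (coprodExpr 1 l) ∧ IsCyclicallyReduced l ∧ xCount l = degree w := by
  obtain ⟨l, hl, hx⟩ := exists_isConj_xCount_eq_degree w
  induction hn : l.length using Nat.strong_induction_on generalizing l with
  | _ n ih =>
  by_cases hcr : IsCyclicallyReduced l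
  · exact ⟨l, hl, hcr, hx⟩
  obtain ⟨l', hc, hlen, hle⟩ := exists_shorter_of_not_isCyclicallyReduced hcr (hx ▸ hd)
  have hl' := hl.trans hc
  exact ih _ (hn ▸ hlen) l' hl' (le_antisymm (hx ▸ hle) (degree_le_xCount hl')) rfl

theorem exists_pow_succ_eq {B : List (ℤ × H)} {β : ℤ} {c : H}
    (hl : IsCyclicallyReduced (B ++ [(β, c)])) (N : ℕ) :
    ∃ A α, coprodExpr 1 (B ++ [(β, c)]) ^ (N + 1) = coprodExpr 1 (A ++ [(α, c)]) ∧
      IsCyclicallyReduced (A ++ [(α, c)]) ∧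
      xCount (A ++ [(α, c)]) = (N + 1) * xCount (B ++ [(β, c)]) := by
  by_cases hc : c = 1
  · subst hc
    obtain rfl := hl.eq_nil
    refine ⟨[], (N + 1 : ℕ) * β, ?_, ⟨fun p hp => ?_, by simp⟩, ?_⟩
    · rw [List.nil_append, List.nil_append, coprodExpr_singleton_one, coprodExpr_singleton_one,
        inr_xgen_zpow_pow]
    · rw [List.nil_append, List.mem_singleton] at hp
      rw [hp]
      exact mul_ne_zero (by omega) hl.ne_zero
    · simp only [List.nil_append, xCount_cons, xCount_nil, Int.natAbs_mul, Int.natAbs_natCast,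
        add_zero]
  · refine ⟨(List.replicate N (B ++ [(β, c)])).flatten ++ B, β, ?_, ?_, ?_⟩
    · rw [coprodExpr_pow, List.replicate_succ', List.flatten_append, List.flatten_singleton,
        List.append_assoc]
    · rw [List.append_assoc]
      refine IsReduced.isCyclicallyReduced fun p hp => ?_
      rcases List.mem_append.mp hp with hp | hp
      · exact (hl.isReduced hc).flatten_replicate N p hp
      · exact hl.isReduced hc p hp
    · rw [List.append_assoc, xCount_append, xCount_flatten_replicate, add_one_mul]

theorem exists_pow_eq {l : List (ℤ × H)} (hl : IsCyclicallyReduced l) (N : ℕ) :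
    ∃ l', coprodExpr 1 l ^ N = coprodExpr 1 l' ∧ IsCyclicallyReduced l' ∧
      xCount l' = N * xCount l := by
  rcases N with _ | N
  · exact ⟨[], by simp, by simp [IsCyclicallyReduced], by simp⟩
  rcases List.eq_nil_or_concat' l with rfl | ⟨B, ⟨β, c⟩, rfl⟩
  · exact ⟨[], by simp, by simp [IsCyclicallyReduced], by simp⟩
  obtain ⟨A, α, he, hA, hx⟩ := exists_pow_succ_eq hl N
  exact ⟨_, he, hA, hx⟩

/-! ### The x-length of reduced words -/

/-- `H ∗ ⟨x⟩` as the free product of a `Bool`-indexed family, so as to use the reduced words of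
`Monoid.CoprodI`; the `ULift` puts `⟨x⟩` in the universe of `H`. -/
abbrev Factor (H : Type u) : Bool → Type u
  | false => H
  | true => ULift (Multiplicative ℤ)

instance : ∀ b, Group (Factor H b)
  | false => inferInstanceAs (Group H)
  | true => inferInstanceAs (Group (ULift (Multiplicative ℤ)))

noncomputable instance (b : Bool) : DecidableEq (Factor H b) := Classical.decEq _

noncomputable def toCoprodI : H ∗ Multiplicative ℤ →* CoprodI (Factor H) :=
  Coprod.lift (of (M := Factor H) (i := false))
    ((of (M := Factor H) (i := true)).comp MulEquiv.ulift.symm.toMonoidHom)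

@[simp] theorem toCoprodI_inl (h : H) :
    toCoprodI (Coprod.inl h) = of (M := Factor H) (i := false) h := by
  simp [toCoprodI]

@[simp] theorem toCoprodI_inr (z : Multiplicative ℤ) :
    toCoprodI (Coprod.inr (M := H) z) = of (M := Factor H) (i := true) ⟨z⟩ := by
  simp [toCoprodI]
  rfl

def xWeight : ∀ b, Factor H b → ℕ
  | false, _ => 0
  | true, z => (toAdd z.down).natAbs

theorem xWeight_one : ∀ b, xWeight (H := H) b 1 = 0
  | false => rfl
  | true => rfl

theorem xWeight_mul_le :
    ∀ b (m m' : Factor H b), xWeight b (m * m') ≤ xWeight b m + xWeight b m'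
  | false, _, _ => le_rfl
  | true, z, z' => Int.natAbs_add_le (toAdd z.down) (toAdd z'.down)

/-- Unlike `degree`, this counts the letters `x^{±1}` of the reduced word of `w` itself, not of its
cyclic reduction. -/
noncomputable def xLength (w : H ∗ Multiplicative ℤ) : ℕ :=
  (Word.equiv (toCoprodI w)).weight xWeight

theorem xLength_mul_le (v w : H ∗ Multiplicative ℤ) :
    xLength (v * w) ≤ xLength v + xLength w := by
  rw [xLength, map_mul]
  exact Word.weight_equiv_mul_le xWeight xWeight_one xWeight_mul_le _ _

theorem xLength_pow_le (w : H ∗ Multiplicative ℤ) (M : ℕ) : xLength (w ^ M) ≤ M * xLength w := by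
  induction M with
  | zero => simp [xLength]
  | succ M ih =>
    rw [pow_succ, add_one_mul]
    exact (xLength_mul_le _ _).trans (Nat.add_le_add_right ih _)

@[simp] theorem xLength_inl (h : H) : xLength (Coprod.inl h) = 0 := by
  rw [xLength, toCoprodI_inl]
  have := Word.weight_equiv_of_le xWeight xWeight_one xWeight_mul_le (i := false) h
  exact Nat.eq_zero_of_le_zero this

theorem xLength_inr_le (z : Multiplicative ℤ) :
    xLength (Coprod.inr (M := H) z) ≤ (toAdd z).natAbs := by
  rw [xLength, toCoprodI_inr]
  exact Word.weight_equiv_of_le xWeight xWeight_one xWeight_mul_le (i := true) ⟨z⟩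

theorem xLength_le_mul_inl (w : H ∗ Multiplicative ℤ) (h : H) :
    xLength w ≤ xLength (w * Coprod.inl h) :=
  calc xLength w = xLength (w * Coprod.inl h * Coprod.inl h⁻¹) := by simp [mul_assoc]
    _ ≤ xLength (w * Coprod.inl h) + xLength (Coprod.inl h⁻¹) := xLength_mul_le _ _
    _ = xLength (w * Coprod.inl h) := by rw [xLength_inl, add_zero]

theorem xLength_coprodExpr_le (l : List (ℤ × H)) : xLength (coprodExpr 1 l) ≤ xCount l := by
  induction l with
  | nil => simp [xLength]
  | cons p l ih =>
    rw [coprodExpr_one_cons, xCount_cons]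
    calc _ ≤ xLength (Coprod.inr (M := H) (xgen ^ p.1)) + xLength (Coprod.inl p.2) +
            xLength (coprodExpr 1 l) :=
          (xLength_mul_le _ _).trans (Nat.add_le_add_right (xLength_mul_le _ _) _)
      _ ≤ p.1.natAbs + 0 + xCount l := by
          gcongr
          · simpa using xLength_inr_le (H := H) (xgen ^ p.1)
          · simp
      _ = p.1.natAbs + xCount l := by rw [add_zero]

theorem up_xgen_zpow_ne_one {β : ℤ} (hβ : β ≠ 0) : (⟨xgen ^ β⟩ : Factor H true) ≠ 1 := fun h =>
  hβ <| by simpa using congrArg (toAdd ∘ ULift.down) h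

theorem fstIdx_equiv_and_xLength_coprodExpr_mul_inr {A : List (ℤ × H)} (hA : IsReduced A)
    {α : ℤ} (hα : α ≠ 0) :
    (Word.equiv (toCoprodI (coprodExpr 1 A * Coprod.inr (xgen ^ α)))).fstIdx = some true ∧
      xLength (coprodExpr 1 A * Coprod.inr (xgen ^ α)) = xCount A + α.natAbs := by
  induction A with
  | nil =>
    have h1 : (Word.equiv (1 : CoprodI (Factor H))).fstIdx ≠ some true := by
      simp [Word.fstIdx, Word.empty]
    rw [coprodExpr_one_nil, one_mul, xLength, toCoprodI_inr, ← mul_one (of _),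
      Word.equiv_of_mul (up_xgen_zpow_ne_one hα) h1]
    simp [xWeight]
  | cons p A ih =>
    obtain ⟨⟨hp₁, hp₂⟩, hA⟩ := List.forall_mem_cons.mp hA
    obtain ⟨ih₁, ih₂⟩ := ih hA
    have e : toCoprodI (coprodExpr 1 (p :: A) * Coprod.inr (xgen ^ α)) =
        of (M := Factor H) (i := true) ⟨xgen ^ p.1⟩ * (of (M := Factor H) (i := false) p.2 *
          toCoprodI (coprodExpr 1 A * Coprod.inr (xgen ^ α))) := by
      simp only [coprodExpr_one_cons, map_mul, toCoprodI_inl, toCoprodI_inr, mul_assoc]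
    have h2 := Word.equiv_of_mul (i := false) hp₂ (by rw [ih₁]; simp)
    rw [xLength, e, Word.equiv_of_mul (up_xgen_zpow_ne_one hp₁) (by rw [h2]; simp)]
    refine ⟨by simp, ?_⟩
    rw [Word.weight_cons, h2, Word.weight_cons, ← xLength, ih₂]
    simp [xWeight]
    ring

theorem xCount_le_xLength {l : List (ℤ × H)} (hl : IsCyclicallyReduced l) :
    xCount l ≤ xLength (coprodExpr 1 l) := by
  rcases List.eq_nil_or_concat' l with rfl | ⟨B, ⟨β, c⟩, rfl⟩
  · simp
  calc xCount (B ++ [(β, c)]) = xLength (coprodExpr 1 B * Coprod.inr (xgen ^ β)) := by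
        rw [(fstIdx_equiv_and_xLength_coprodExpr_mul_inr hl.isReduced_left hl.ne_zero).2]
        simp
    _ ≤ xLength (coprodExpr 1 B * Coprod.inr (xgen ^ β) * Coprod.inl c) := xLength_le_mul_inl _ _
    _ = xLength (coprodExpr 1 (B ++ [(β, c)])) := by simp [mul_assoc]

/-! ### Degrees of cyclically reduced expressions -/

/-- Conjugating the powers of `u` by a fixed element changes their `xLength` by a bounded amount,
so a linear lower bound on `xLength (u ^ M)` passes to every conjugate of `u`. -/
theorem le_xLength_of_isConj {u u' : H ∗ Multiplicative ℤ} {n : ℕ}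
    (h : ∀ M : ℕ, M * n ≤ xLength (u ^ M)) (hc : IsConj u u') : n ≤ xLength u' := by
  obtain ⟨c, rfl⟩ := isConj_iff.mp hc
  by_contra! hlt
  set C := xLength c⁻¹ + xLength c
  have hpow : ∀ M : ℕ, M * n ≤ C + M * xLength (c * u * c⁻¹) := fun M =>
    calc M * n ≤ xLength (u ^ M) := h M
      _ = xLength (c⁻¹ * (c * u * c⁻¹) ^ M * c) := by rw [conj_pow]; group
      _ ≤ xLength c⁻¹ + xLength ((c * u * c⁻¹) ^ M) + xLength c :=
          (xLength_mul_le _ _).trans (Nat.add_le_add_right (xLength_mul_le _ _) _)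
      _ ≤ xLength c⁻¹ + M * xLength (c * u * c⁻¹) + xLength c := by
          gcongr
          exact xLength_pow_le _ _
      _ = C + M * xLength (c * u * c⁻¹) := by ring
  nlinarith [hpow (C + 1)]

theorem le_degree_of_le_xLength_pow {w : H ∗ Multiplicative ℤ} {n : ℕ}
    (h : ∀ M : ℕ, M * n ≤ xLength (w ^ M)) : n ≤ degree w := by
  obtain ⟨l, hl, hx⟩ := exists_isConj_xCount_eq_degree w
  calc n ≤ xLength (coprodExpr 1 l) := le_xLength_of_isConj h hl
    _ ≤ xCount l := xLength_coprodExpr_le l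
    _ = degree w := hx

theorem degree_coprodExpr_pow {l : List (ℤ × H)} (hl : IsCyclicallyReduced l) (N : ℕ) :
    degree (coprodExpr 1 l ^ N) = N * xCount l := by
  obtain ⟨l', he, -, hx⟩ := exists_pow_eq hl N
  refine le_antisymm (hx ▸ degree_le_xCount (h₀ := 1) (isConj_iff.mpr ⟨1, by simp [he]⟩)) ?_
  refine le_degree_of_le_xLength_pow fun M => ?_
  obtain ⟨l'', he', hl'', hx'⟩ := exists_pow_eq hl (N * M)
  rw [← pow_mul, he']
  calc M * (N * xCount l) = xCount l'' := by rw [hx']; ring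
    _ ≤ _ := xCount_le_xLength hl''

theorem degree_coprodExpr {l : List (ℤ × H)} (hl : IsCyclicallyReduced l) :
    degree (coprodExpr 1 l) = xCount l := by
  simpa using degree_coprodExpr_pow hl 1

/-! ### Elements of prescribed degree in a normal subgroup -/

/-- With `g = h x^k h⁻¹`, no cancellation occurs in `v^R · g v g⁻¹` once `c * h ≠ 1` and
`h ≠ 1`: the conjugation inserts `2k` new letters `x^{±1}`. -/
theorem coprodExpr_mul_conj (A B : List (ℤ × H)) (α β k : ℤ) (c h : H) :
    coprodExpr 1 (A ++ [(α, c)]) *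
        ((Coprod.inl h * Coprod.inr (xgen ^ k) * Coprod.inl h⁻¹) * coprodExpr 1 (B ++ [(β, c)]) *
          (Coprod.inl h * Coprod.inr (xgen ^ k) * Coprod.inl h⁻¹)⁻¹) =
      coprodExpr 1 (A ++ (α, c * h) :: (k, h⁻¹) :: B ++ [(β, c * h), (-k, h⁻¹)]) := by
  simp only [coprodExpr_one_append, coprodExpr_one_cons, coprodExpr_one_nil, map_mul, map_inv,
    zpow_neg]
  group

theorem exists_ne_one_mul_ne_one (hH : ∃ h₁ h₂ : H, h₁ ≠ 1 ∧ h₂ ≠ 1 ∧ h₁ ≠ h₂) (c : H) :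
    ∃ h : H, h ≠ 1 ∧ c * h ≠ 1 := by
  obtain ⟨h₁, h₂, h₁_ne, h₂_ne, hne⟩ := hH
  by_cases hc : c * h₁ = 1
  · exact ⟨h₂, h₂_ne, fun hc₂ => hne (mul_left_cancel (hc.trans hc₂.symm))⟩
  · exact ⟨h₁, h₁_ne, hc⟩

theorem exists_mem_degree_eq (hH : ∃ h₁ h₂ : H, h₁ ≠ 1 ∧ h₂ ≠ 1 ∧ h₁ ≠ h₂)
    {N : Subgroup (H ∗ Multiplicative ℤ)} [N.Normal] {w : H ∗ Multiplicative ℤ} (hw : w ∈ N)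
    (hd : degree w ≠ 0) (R k : ℕ) : ∃ u ∈ N, degree u = (R + 2) * degree w + 2 * k := by
  obtain ⟨l, hconj, hl, hx⟩ := exists_isConj_isCyclicallyReduced hd
  have hv : coprodExpr 1 l ∈ N := by
    obtain ⟨c, hc⟩ := isConj_iff.mp hconj
    exact hc ▸ Subgroup.Normal.conj_mem inferInstance w hw c
  rcases k.eq_zero_or_pos with rfl | hk
  · exact ⟨_, pow_mem hv (R + 2), by rw [degree_coprodExpr_pow hl, hx, mul_zero, add_zero]⟩
  rcases List.eq_nil_or_concat' l with rfl | ⟨B, ⟨β, c⟩, rfl⟩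
  · exact absurd hx.symm (by simpa using hd)
  obtain ⟨h, hh, hch⟩ := exists_ne_one_mul_ne_one hH c
  obtain ⟨A, α, hpow, hA, hAx⟩ := exists_pow_succ_eq hl R
  have hred : IsReduced (A ++ (α, c * h) :: (k, h⁻¹) :: B ++ [(β, c * h), (-k, h⁻¹)]) := by
    simp only [IsReduced, List.forall_mem_append, List.forall_mem_cons]
    exact ⟨⟨hA.isReduced_left, ⟨hA.ne_zero, hch⟩, ⟨by omega, inv_ne_one.mpr hh⟩,
      hl.isReduced_left⟩, ⟨hl.ne_zero, hch⟩, ⟨by omega, inv_ne_one.mpr hh⟩, by simp⟩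
  refine ⟨_, mul_mem (pow_mem hv (R + 1)) (Subgroup.Normal.conj_mem inferInstance _ hv
    (Coprod.inl h * Coprod.inr (xgen ^ (k : ℤ)) * Coprod.inl h⁻¹)), ?_⟩
  rw [hpow, coprodExpr_mul_conj, degree_coprodExpr hred.isCyclicallyReduced, ← hx]
  simp only [xCount_append, xCount_cons, xCount_nil, Int.natAbs_neg, Int.natAbs_natCast] at hAx ⊢
  linarith

end FreeProductDegree

open FreeProductDegree in
theorem stmt18_general {H F : Type*} [Group H] [Group F]
    (hH : ∃ h₁ h₂ : H, h₁ ≠ 1 ∧ h₂ ≠ 1 ∧ h₁ ≠ h₂)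
    (φ : H ∗ Multiplicative ℤ →* F)
    (d : ℕ) (hodd : Odd d)
    (hd : ∃ w ∈ φ.ker, w ≠ 1 ∧ degree w = d) :
    ∀ n : ℕ, 3 * d ≤ n → ∃ w ∈ φ.ker, w ≠ 1 ∧ degree w = n := by
  intro n hn
  obtain ⟨w, hw, -, rfl⟩ := hd
  have hd0 : degree w ≠ 0 := fun h => by simp [h] at hodd
  obtain ⟨R, k, rfl⟩ : ∃ R k : ℕ, n = (R + 2) * degree w + 2 * k := by
    obtain ⟨m, hm⟩ := hodd
    rcases Nat.even_or_odd n with ⟨j, hj⟩ | ⟨j, hj⟩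
    · exact ⟨0, (n - 2 * degree w) / 2, by omega⟩
    · exact ⟨1, (n - 3 * degree w) / 2, by omega⟩
  obtain ⟨u, hu, hdeg⟩ := exists_mem_degree_eq hH hw hd0 R k
  refine ⟨u, hu, fun h1 => ?_, hdeg⟩
  rw [h1, degree_one] at hdeg
  have := Nat.mul_pos (Nat.succ_pos (R + 1)) (Nat.pos_of_ne_zero hd0)
  omega

/-- let `H` be a group with at least two distinct non-trivial elements and
`N = ker φ` for a homomorphism `φ : H ∗ ⟨x⟩ →* F` which is injective on `H`.  If `N`
contains a non-trivial element of odd degree `d`, then for every `n ≥ 3d` the subgroup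
`N` contains a non-trivial element of degree `n`. -/
theorem stmt18 {H F : Type*} [Group H] [Group F]
    (hH : ∃ h₁ h₂ : H, h₁ ≠ 1 ∧ h₂ ≠ 1 ∧ h₁ ≠ h₂)
    (φ : H ∗ Multiplicative ℤ →* F)
    (hinj : Function.Injective (φ.comp Coprod.inl))
    (d : ℕ) (hodd : Odd d)
    (hd : ∃ w ∈ φ.ker, w ≠ 1 ∧ degree w = d) :
    ∀ n : ℕ, 3 * d ≤ n → ∃ w ∈ φ.ker, w ≠ 1 ∧ degree w = n :=
  stmt18_general hH φ d hodd hd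
end
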